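/- Let H and G be abelian groups, f : H → G and h : H → ℤ group homomorphisms, and let k_M, k_N be positive integers with greatest common divisor n. Define ψ : H × ℤ → G × (ℤ/k_M) × (ℤ/k_N) by ψ(x,a) = (f(x), a mod k_M, h(x) − a mod k_N), and ψ' : H → G × (ℤ/n) by ψ'(x) = (f(x), h(x) mod n). Then the cokernels of ψ and ψ' are isomorphic, with an isomorphism induced by the map (g, [u], [v]) ↦ (g, [u+v]). -/
import Mathlib


/-- Cokernels of ψ and ψ' are isomorphic via the map induced by (g,[u],[v]) ↦ (g,[u+v]). -/
theorem stmt_0 {H G : Type*} [AddCommGroup H] [AddCommGroup G]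
    (f : H →+ G) (h : H →+ ℤ) (kM kN : ℕ) (hkM : 0 < kM) (hkN : 0 < kN)
    (ψ : H × ℤ →+ G × (ZMod kM × ZMod kN))
    (hψ : ∀ (x : H) (a : ℤ),
      ψ (x, a) = (f x, ((a : ZMod kM), (((h x - a : ℤ) : ZMod kN)))))
    (ψ' : H →+ G × ZMod (Nat.gcd kM kN))
    (hψ' : ∀ x : H, ψ' x = (f x, ((h x : ℤ) : ZMod (Nat.gcd kM kN)))) :
    ∃ e : ((G × (ZMod kM × ZMod kN)) ⧸ ψ.range) ≃+
        ((G × ZMod (Nat.gcd kM kN)) ⧸ ψ'.range),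
      ∀ (g : G) (u v : ℤ),
        e (QuotientAddGroup.mk (g, ((u : ZMod kM), (v : ZMod kN))))
          = QuotientAddGroup.mk (g, ((u + v : ℤ) : ZMod (Nat.gcd kM kN))) := by
  have hdM : Nat.gcd kM kN ∣ kM := Nat.gcd_dvd_left kM kN
  have hdN : Nat.gcd kM kN ∣ kN := Nat.gcd_dvd_right kM kN
  haveI : NeZero kM := ⟨hkM.ne'⟩
  haveI : NeZero kN := ⟨hkN.ne'⟩
  haveI : NeZero (Nat.gcd kM kN) := ⟨(Nat.gcd_pos_of_pos_left kN hkM).ne'⟩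
  -- the underlying map
  let p : G × (ZMod kM × ZMod kN) →+ G × ZMod (Nat.gcd kM kN) :=
    (AddMonoidHom.id G).prodMap
      (((ZMod.castHom hdM (ZMod (Nat.gcd kM kN))).toAddMonoidHom).coprod
        ((ZMod.castHom hdN (ZMod (Nat.gcd kM kN))).toAddMonoidHom))
  have hpdef : ∀ z : G × (ZMod kM × ZMod kN),
      p z = (z.1, ZMod.castHom hdM (ZMod (Nat.gcd kM kN)) z.2.1
        + ZMod.castHom hdN (ZMod (Nat.gcd kM kN)) z.2.2) := fun z => rfl
  have hp : ∀ (g : G) (u v : ℤ),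
      p (g, ((u : ZMod kM), (v : ZMod kN))) = (g, ((u + v : ℤ) : ZMod (Nat.gcd kM kN))) := by
    intro g u v
    rw [hpdef]
    simp only [map_intCast]
    push_cast
    rfl
  let Φ : G × (ZMod kM × ZMod kN) →+ (G × ZMod (Nat.gcd kM kN)) ⧸ ψ'.range :=
    (QuotientAddGroup.mk' ψ'.range).comp p
  have hΦ : ∀ z, Φ z = QuotientAddGroup.mk (p z) := fun z => rfl
  have hsurj : Function.Surjective Φ := by
    intro q
    obtain ⟨⟨g, w⟩, rfl⟩ := QuotientAddGroup.mk'_surjective ψ'.range q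
    refine ⟨(g, (((w.val : ℤ) : ZMod kM), ((0 : ℤ) : ZMod kN))), ?_⟩
    rw [hΦ, hp, QuotientAddGroup.mk'_apply]
    congr 2
    · push_cast
      simp [ZMod.natCast_val, ZMod.cast_id]
  have hker : Φ.ker = ψ.range := by
    ext z
    constructor
    · intro hz
      obtain ⟨g, u', v'⟩ := z
      have hz' : p (g, (u', v')) ∈ ψ'.range := by
        rwa [AddMonoidHom.mem_ker, hΦ, QuotientAddGroup.eq_zero_iff] at hz
      obtain ⟨x, hx⟩ := hz'
      rw [hψ' x] at hx
      set u : ℤ := (u'.val : ℤ) with hu'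
      set v : ℤ := (v'.val : ℤ) with hv'
      have hu : (u : ZMod kM) = u' := by simp [hu', ZMod.natCast_val, ZMod.cast_id]
      have hv : (v : ZMod kN) = v' := by simp [hv', ZMod.natCast_val, ZMod.cast_id]
      rw [← hu, ← hv, hp, Prod.mk.injEq] at hx
      obtain ⟨hg, hsum⟩ := hx
      have hdvd : ((Nat.gcd kM kN : ℕ) : ℤ) ∣ (u + v) - h x :=
        ((ZMod.intCast_eq_intCast_iff _ _ _).mp hsum).dvd
      obtain ⟨c, hc⟩ := hdvd
      set a : ℤ := u - kM * (Int.gcdA kM kN) * c with ha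
      refine ⟨(x, a), ?_⟩
      rw [hψ]
      have h1 : ((a : ZMod kM)) = u' := by
        rw [← hu, ha]; push_cast; simp
      have h2 : (((h x - a : ℤ) : ZMod kN)) = v' := by
        rw [← hv]
        have hbez : ((Nat.gcd kM kN : ℕ) : ℤ)
            = kM * Int.gcdA kM kN + kN * Int.gcdB kM kN := by
          exact_mod_cast Int.gcd_eq_gcd_ab kM kN
        have key : h x - a = v - kN * (Int.gcdB kM kN * c) := by
          linear_combination (-1 : ℤ) * ha - hc - c * hbez
        rw [key]; push_cast; simp
      rw [h1, h2, hg]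
    · rintro ⟨⟨x, a⟩, rfl⟩
      rw [AddMonoidHom.mem_ker, hψ, hΦ]
      have : ((h x - a : ℤ) : ZMod kN) = (((h x - a : ℤ) : ℤ) : ZMod kN) := rfl
      rw [show (f x, ((a : ZMod kM), ((h x - a : ℤ) : ZMod kN)))
            = (f x, (((a : ℤ) : ZMod kM), (((h x - a : ℤ) : ℤ) : ZMod kN))) from rfl,
        hp, QuotientAddGroup.eq_zero_iff]
      refine ⟨x, ?_⟩
      rw [hψ']
      congr 2
      ring
  refine ⟨(QuotientAddGroup.quotientAddEquivOfEq hker.symm).trans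
    (QuotientAddGroup.quotientKerEquivOfSurjective Φ hsurj), ?_⟩
  intro g u v
  have key : QuotientAddGroup.quotientKerEquivOfSurjective Φ hsurj
      (QuotientAddGroup.mk (g, ((u : ZMod kM), (v : ZMod kN)))) =
      Φ (g, ((u : ZMod kM), (v : ZMod kN))) := rfl
  simp only [AddEquiv.trans_apply, QuotientAddGroup.quotientAddEquivOfEq_mk, key]
  rw [hΦ, hp]
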